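/- Let $K_l, K_r$ be invertible upper-triangular real $3\times 3$ matrices with positive diagonal entries, $R \in SO(3)$, $t \in \mathbb{R}^3 \setminus \{0\}$, and $F = K_r^{-\top} T R K_l^{-1}$ where $T$ is the cross-product matrix of $t$. Let $w \in \mathbb{R}^3$ satisfy $\langle w, e_3 \rangle > 0$ and $\langle Rw + t, e_3 \rangle > 0$, and let $x \in \mathbb{R}^3$ with $\lambda_l x = K_l w$ for some $\lambda_l > 0$. If $(Fx)_1 = (Fx)_2 = 0$ then $(Fx)_3 = 0$. -/

import Mathlib

open Matrix

theorem epipolar_line_nondegenerate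
    (Kl Kr R T F : Matrix (Fin 3) (Fin 3) ℝ) (t w x : Fin 3 → ℝ)
    (hKlu : Kl.BlockTriangular id) (hKru : Kr.BlockTriangular id)
    (hKld : ∀ i, 0 < Kl i i) (hKrd : ∀ i, 0 < Kr i i)
    (hKl : IsUnit Kl.det) (hKr : IsUnit Kr.det)
    (hR : Rᵀ * R = 1) (hdet : R.det = 1) (ht : t ≠ 0)
    (hT : ∀ v : Fin 3 → ℝ, T *ᵥ v = t ⨯₃ v)
    (hF : F = (Kr⁻¹)ᵀ * T * R * Kl⁻¹)
    (hw1 : 0 < w 2) (hw2 : 0 < (R *ᵥ w + t) 2)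
    (lamL : ℝ) (hlam : 0 < lamL) (hx : lamL • x = Kl *ᵥ w)
    (h1 : (F *ᵥ x) 0 = 0) (h2 : (F *ᵥ x) 1 = 0) :
    (F *ᵥ x) 2 = 0 := by
  have hlam' : lamL ≠ 0 := ne_of_gt hlam
  have hlaminv : (lamL⁻¹ : ℝ) ≠ 0 := inv_ne_zero hlam'
  set u := R *ᵥ w with hu
  set y := F *ᵥ x with hy
  have hxval : x = lamL⁻¹ • (Kl *ᵥ w) := by
    rw [← hx, smul_smul, inv_mul_cancel₀ hlam', one_smul]
  have hKrT : IsUnit Krᵀ.det := by simpa [Matrix.det_transpose] using hKr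
  have hmul : Krᵀ * F = T * R * Kl⁻¹ := by
    rw [hF, Matrix.transpose_nonsing_inv, ← Matrix.mul_assoc, ← Matrix.mul_assoc,
      ← Matrix.mul_assoc, Matrix.mul_nonsing_inv _ hKrT, Matrix.one_mul]
  have hinvKl : Kl⁻¹ *ᵥ (Kl *ᵥ w) = w := by
    rw [Matrix.mulVec_mulVec, Matrix.nonsing_inv_mul Kl hKl, Matrix.one_mulVec]
  have hkey : Krᵀ *ᵥ y = lamL⁻¹ • (t ⨯₃ u) := by
    rw [hy, Matrix.mulVec_mulVec, hmul, hxval, Matrix.mulVec_smul, ← Matrix.mulVec_mulVec,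
      ← Matrix.mulVec_mulVec, hinvKl, ← hu, hT]
  have z10 : Kr 1 0 = 0 := hKru (by decide : (0 : Fin 3) < 1)
  have z20 : Kr 2 0 = 0 := hKru (by decide : (0 : Fin 3) < 2)
  have z21 : Kr 2 1 = 0 := hKru (by decide : (1 : Fin 3) < 2)
  have e0 := congrFun hkey 0
  have e1 := congrFun hkey 1
  have e2 := congrFun hkey 2
  simp only [Matrix.mulVec, dotProduct, Fin.sum_univ_three, Matrix.transpose_apply,
    Pi.smul_apply, smul_eq_mul, h1, h2, z10, z20, z21, mul_zero, zero_mul,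
    add_zero, zero_add] at e0 e1 e2
  -- e0 : 0 = lamL⁻¹ * s 0 ; e1 : 0 = lamL⁻¹ * s 1 ; e2 : Kr 2 2 * y 2 = lamL⁻¹ * s 2
  have hs0 : (t ⨯₃ u) 0 = 0 := by
    rcases mul_eq_zero.mp e0.symm with h | h
    · exact absurd h hlaminv
    · exact h
  have hs1 : (t ⨯₃ u) 1 = 0 := by
    rcases mul_eq_zero.mp e1.symm with h | h
    · exact absurd h hlaminv
    · exact h
  have hc0 : t 1 * u 2 - t 2 * u 1 = 0 := by
    simpa [crossProduct] using hs0
  have hc1 : t 2 * u 0 - t 0 * u 2 = 0 := by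
    simpa [crossProduct] using hs1
  have goal2 : t 0 * u 1 - t 1 * u 0 = 0 := by
    by_cases ht2 : t 2 = 0
    · have h02 : t 1 * u 2 = 0 := by linear_combination hc0 + u 1 * ht2
      have h12 : t 0 * u 2 = 0 := by linear_combination -hc1 + u 0 * ht2
      by_cases hu2 : u 2 = 0
      · exfalso
        have hadd : (R *ᵥ w + t) 2 = u 2 + t 2 := by simp [hu]
        rw [hadd, hu2, ht2] at hw2
        exact lt_irrefl 0 (by linarith)
      · have ht0 : t 0 = 0 := by
          rcases mul_eq_zero.mp h12 with h | h
          · exact h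
          · exact absurd h hu2
        have ht1 : t 1 = 0 := by
          rcases mul_eq_zero.mp h02 with h | h
          · exact h
          · exact absurd h hu2
        exact absurd (funext fun i => by fin_cases i <;> simp [ht0, ht1, ht2]) ht
    · have hkey2 : t 2 * (t 0 * u 1 - t 1 * u 0) = 0 := by
        linear_combination (-(t 0)) * hc0 + (-(t 1)) * hc1
      rcases mul_eq_zero.mp hkey2 with h | h
      · exact absurd h ht2
      · exact h
  have hs2 : (t ⨯₃ u) 2 = 0 := by
    simpa [crossProduct] using goal2
  rw [hs2, mul_zero] at e2
  rcases mul_eq_zero.mp e2 with h | h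
  · exact absurd h (ne_of_gt (hKrd 2))
  · exact h
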